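/- arXiv:1201.0972 — 3 statements merged into one kernel-verified Lean document; each statement's English description precedes it below -/
import Mathlib

section
/- Let Ω ⊆ ℝⁿ be open, let u, ũ : Ω → ℝ be continuously differentiable with ∇u(x) ≠ 0 and ∇ũ(x) ≠ 0 for all x ∈ Ω, and let H, H̃ : Ω → ℝ be continuously differentiable. Set v = ũ − u. Then the pointwise vector identity (H/‖∇ũ‖²) ( ∇v − (⟨∇u + ∇ũ, ∇v⟩/‖∇u‖²) ∇u ) + ((H̃ − H)/‖∇ũ‖²) ∇ũ = (H̃/‖∇ũ‖²) ∇ũ − (H/‖∇u‖²) ∇u holds on Ω. Consequently, if both div(H ‖∇u‖⁻² ∇u) = 0 and div(H̃ ‖∇ũ‖⁻² ∇ũ) = 0 on Ω, then div( (H/‖∇ũ‖²) ( I − (∇u ⊗ (∇u + ∇ũ))/‖∇u‖² ) ∇v + ((H̃ − H)/‖∇ũ‖²) ∇ũ ) = 0 on Ω, i.e., the difference v of two solutions of the 0-Laplacian satisfies a linear second-order equation with source term proportional to H̃ − H. -/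
/-!
Since `⟪∇u + ∇ũ, ∇ũ - ∇u⟫ = ‖∇ũ‖² - ‖∇u‖²`, the linearised field is, pointwise and by pure
algebra, the difference `H̃ ‖∇ũ‖⁻² ∇ũ - H ‖∇u‖⁻² ∇u` of the two fluxes. On the open set `Ω` the
two fields agree near every point, so they have the same derivative there, and the divergence of
a difference of differentiable fields is the difference of the divergences, here `0 - 0`.
-/

open scoped RealInnerProductSpace

/-- The divergence of a vector field on `ℝⁿ`: `div F = ∑ i ∂Fᵢ/∂xᵢ`. -/
noncomputable def pdiv {n : ℕ} (F : EuclideanSpace ℝ (Fin n) → EuclideanSpace ℝ (Fin n))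
    (x : EuclideanSpace ℝ (Fin n)) : ℝ :=
  ∑ i, fderiv ℝ F x (EuclideanSpace.single i 1) i

section VectorIdentity

variable {E : Type*} [NormedAddCommGroup E] [InnerProductSpace ℝ E]

theorem real_inner_add_sub_eq_norm_sq_sub_norm_sq (a b : E) :
    ⟪a + b, b - a⟫ = ‖b‖ ^ 2 - ‖a‖ ^ 2 := by
  simp only [inner_add_left, inner_sub_right, real_inner_comm a b, real_inner_self_eq_norm_sq]
  ring

theorem div_norm_sq_smul_sub_inner_add_smul_eq_sub {a b : E} (H H' : ℝ) (hb : b ≠ 0) :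
    (H / ‖b‖ ^ 2) • ((b - a) - (⟪a + b, b - a⟫ / ‖a‖ ^ 2) • a) + ((H' - H) / ‖b‖ ^ 2) • b
      = (H' / ‖b‖ ^ 2) • b - (H / ‖a‖ ^ 2) • a := by
  rcases eq_or_ne a 0 with rfl | ha
  · simp only [sub_zero, smul_zero, ← add_smul]
    ring_nf
  have ha' : ‖a‖ ≠ 0 := norm_ne_zero_iff.mpr ha
  have hb' : ‖b‖ ≠ 0 := norm_ne_zero_iff.mpr hb
  rw [real_inner_add_sub_eq_norm_sq_sub_norm_sq]
  match_scalars <;> field_simp <;> ring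

end VectorIdentity

section Divergence

variable {n : ℕ} {F G : EuclideanSpace ℝ (Fin n) → EuclideanSpace ℝ (Fin n)}
  {x : EuclideanSpace ℝ (Fin n)}

theorem Filter.EventuallyEq.pdiv_eq (h : F =ᶠ[nhds x] G) : pdiv F x = pdiv G x := by
  simp only [pdiv, h.fderiv_eq]

theorem pdiv_sub (hF : DifferentiableAt ℝ F x) (hG : DifferentiableAt ℝ G x) :
    pdiv (fun y => F y - G y) x = pdiv F x - pdiv G x := by
  simp only [pdiv, fderiv_fun_sub hF hG, sub_apply, PiLp.sub_apply,
    Finset.sum_sub_distrib]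

end Divergence

theorem difference_of_zero_laplacian_solutions_solves_linear_equation_general
    (n : ℕ) (Ω : Set (EuclideanSpace ℝ (Fin n))) (hΩ : IsOpen Ω)
    (u ut H H' : EuclideanSpace ℝ (Fin n) → ℝ)
    (hgut : ∀ x ∈ Ω, gradient ut x ≠ 0) :
    (∀ x ∈ Ω,
      (H x / ‖gradient ut x‖ ^ 2) •
          ((gradient ut x - gradient u x)
            - (⟪gradient u x + gradient ut x, gradient ut x - gradient u x⟫ / ‖gradient u x‖ ^ 2)
                • gradient u x)
        + ((H' x - H x) / ‖gradient ut x‖ ^ 2) • gradient ut x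
      = (H' x / ‖gradient ut x‖ ^ 2) • gradient ut x - (H x / ‖gradient u x‖ ^ 2) • gradient u x)
    ∧ ((∀ x ∈ Ω,
          DifferentiableAt ℝ (fun y => (H y / ‖gradient u y‖ ^ 2) • gradient u y) x ∧
          pdiv (fun y => (H y / ‖gradient u y‖ ^ 2) • gradient u y) x = 0) →
       (∀ x ∈ Ω,
          DifferentiableAt ℝ (fun y => (H' y / ‖gradient ut y‖ ^ 2) • gradient ut y) x ∧
          pdiv (fun y => (H' y / ‖gradient ut y‖ ^ 2) • gradient ut y) x = 0) →
       ∀ x ∈ Ω,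
          DifferentiableAt ℝ (fun y =>
            (H y / ‖gradient ut y‖ ^ 2) •
                ((gradient ut y - gradient u y)
                  - (⟪gradient u y + gradient ut y, gradient ut y - gradient u y⟫
                      / ‖gradient u y‖ ^ 2) • gradient u y)
              + ((H' y - H y) / ‖gradient ut y‖ ^ 2) • gradient ut y) x ∧
          pdiv (fun y =>
            (H y / ‖gradient ut y‖ ^ 2) •
                ((gradient ut y - gradient u y)
                  - (⟪gradient u y + gradient ut y, gradient ut y - gradient u y⟫
                      / ‖gradient u y‖ ^ 2) • gradient u y)
              + ((H' y - H y) / ‖gradient ut y‖ ^ 2) • gradient ut y) x = 0) := by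
  have pointwise : ∀ x ∈ Ω, _ := fun x hx =>
    div_norm_sq_smul_sub_inner_add_smul_eq_sub (a := gradient u x) (H x) (H' x) (hgut x hx)
  refine ⟨pointwise, fun hFu hFut x hx => ?_⟩
  obtain ⟨hFu_diff, hFu_div⟩ := hFu x hx
  obtain ⟨hFut_diff, hFut_div⟩ := hFut x hx
  have near_x := Filter.eventuallyEq_of_mem (hΩ.mem_nhds hx) pointwise
  refine ⟨(hFut_diff.sub hFu_diff).congr_of_eventuallyEq near_x, ?_⟩
  rw [near_x.pdiv_eq, pdiv_sub hFut_diff hFu_diff, hFu_div, hFut_div, sub_zero]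

/-- let `u, ut` be `C¹` with nonvanishing gradients on an open set `Ω ⊆ ℝⁿ`,
`H, H'` be `C¹`, and `v = ut − u`.  Then the pointwise identity
`(H/‖∇ut‖²)(∇v − (⟨∇u+∇ut, ∇v⟩/‖∇u‖²)∇u) + ((H'−H)/‖∇ut‖²)∇ut = (H'/‖∇ut‖²)∇ut − (H/‖∇u‖²)∇u`
holds on `Ω`; consequently, if both `div(H ‖∇u‖⁻² ∇u) = 0` and `div(H' ‖∇ut‖⁻² ∇ut) = 0` on
`Ω` (the fields being differentiable there), then the field
`(H/‖∇ut‖²)(I − (∇u ⊗ (∇u+∇ut))/‖∇u‖²)∇v + ((H'−H)/‖∇ut‖²)∇ut` is divergence free on `Ω`. -/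
theorem difference_of_zero_laplacian_solutions_solves_linear_equation
    (n : ℕ) (hn : 2 ≤ n) (Ω : Set (EuclideanSpace ℝ (Fin n))) (hΩ : IsOpen Ω)
    (u ut H H' : EuclideanSpace ℝ (Fin n) → ℝ)
    (hu : ContDiffOn ℝ 1 u Ω) (hut : ContDiffOn ℝ 1 ut Ω)
    (hH : ContDiffOn ℝ 1 H Ω) (hH' : ContDiffOn ℝ 1 H' Ω)
    (hgu : ∀ x ∈ Ω, gradient u x ≠ 0) (hgut : ∀ x ∈ Ω, gradient ut x ≠ 0) :
    (∀ x ∈ Ω,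
      (H x / ‖gradient ut x‖ ^ 2) •
          ((gradient ut x - gradient u x)
            - (⟪gradient u x + gradient ut x, gradient ut x - gradient u x⟫ / ‖gradient u x‖ ^ 2)
                • gradient u x)
        + ((H' x - H x) / ‖gradient ut x‖ ^ 2) • gradient ut x
      = (H' x / ‖gradient ut x‖ ^ 2) • gradient ut x - (H x / ‖gradient u x‖ ^ 2) • gradient u x)
    ∧ ((∀ x ∈ Ω,
          DifferentiableAt ℝ (fun y => (H y / ‖gradient u y‖ ^ 2) • gradient u y) x ∧
          pdiv (fun y => (H y / ‖gradient u y‖ ^ 2) • gradient u y) x = 0) →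
       (∀ x ∈ Ω,
          DifferentiableAt ℝ (fun y => (H' y / ‖gradient ut y‖ ^ 2) • gradient ut y) x ∧
          pdiv (fun y => (H' y / ‖gradient ut y‖ ^ 2) • gradient ut y) x = 0) →
       ∀ x ∈ Ω,
          DifferentiableAt ℝ (fun y =>
            (H y / ‖gradient ut y‖ ^ 2) •
                ((gradient ut y - gradient u y)
                  - (⟪gradient u y + gradient ut y, gradient ut y - gradient u y⟫
                      / ‖gradient u y‖ ^ 2) • gradient u y)
              + ((H' y - H y) / ‖gradient ut y‖ ^ 2) • gradient ut y) x ∧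
          pdiv (fun y =>
            (H y / ‖gradient ut y‖ ^ 2) •
                ((gradient ut y - gradient u y)
                  - (⟪gradient u y + gradient ut y, gradient ut y - gradient u y⟫
                      / ‖gradient u y‖ ^ 2) • gradient u y)
              + ((H' y - H y) / ‖gradient ut y‖ ^ 2) • gradient ut y) x = 0) :=
  difference_of_zero_laplacian_solutions_solves_linear_equation_general n Ω hΩ u ut H H' hgut
end

section
/- Let n ≥ 2 and let a, b ∈ ℝⁿ be nonzero vectors. Consider the quadratic form Q(v) = ⟨a+b, v⟩² − (‖a‖² + ‖b‖²) ‖v‖² associated with the symmetric matrix M = (a+b)⊗(a+b) − (‖a‖² + ‖b‖²) I. Then: (i) if ⟨a,b⟩ > 0, Q(a+b) > 0 and Q(v) < 0 for every nonzero v orthogonal to a+b, so M has signature (1, n−1) (the operator is strictly hyperbolic); (ii) if ⟨a,b⟩ < 0, then Q(v) < 0 for every nonzero v ∈ ℝⁿ, so M is negative definite (the operator is elliptic). -/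
open scoped RealInnerProductSpace

/-- The quadratic form `Q(v) = ⟨a+b, v⟩² − (‖a‖² + ‖b‖²) ‖v‖²` of the matrix
`M = (a+b)⊗(a+b) − (‖a‖² + ‖b‖²) I`. -/
noncomputable def symQuadForm {n : ℕ} (a b v : EuclideanSpace ℝ (Fin n)) : ℝ :=
  ⟪a + b, v⟫ ^ 2 - (‖a‖ ^ 2 + ‖b‖ ^ 2) * ‖v‖ ^ 2

/-- let `n ≥ 2` and `a, b ∈ ℝⁿ` be nonzero.  For the quadratic form
`Q(v) = ⟨a+b, v⟩² − (‖a‖² + ‖b‖²)‖v‖²`: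
(i) if `⟨a,b⟩ > 0` then `Q(a+b) > 0` and `Q(v) < 0` for every nonzero `v ⟂ a+b`,
so `M` has signature `(1, n−1)` (strict hyperbolicity);
(ii) if `⟨a,b⟩ < 0` then `Q(v) < 0` for every nonzero `v`, i.e. `M` is negative
definite (ellipticity). -/
theorem hyperbolic_or_elliptic_according_to_sign_of_inner_product
    (n : ℕ) (hn : 2 ≤ n) (a b : EuclideanSpace ℝ (Fin n)) (ha : a ≠ 0) (hb : b ≠ 0) :
    ((0 < ⟪a, b⟫) →
      0 < symQuadForm a b (a + b) ∧
      (∀ v : EuclideanSpace ℝ (Fin n), v ≠ 0 → ⟪a + b, v⟫ = 0 → symQuadForm a b v < 0)) ∧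
    ((⟪a, b⟫ < 0) →
      ∀ v : EuclideanSpace ℝ (Fin n), v ≠ 0 → symQuadForm a b v < 0) := by
  have ha2 : (0:ℝ) < ‖a‖ ^ 2 := pow_pos (norm_pos_iff.mpr ha) 2
  have hb2 : (0:ℝ) < ‖b‖ ^ 2 := pow_pos (norm_pos_iff.mpr hb) 2
  have hab : ‖a + b‖ ^ 2 = ‖a‖ ^ 2 + 2 * ⟪a, b⟫ + ‖b‖ ^ 2 :=
    norm_add_sq_real a b
  have hself : ⟪a + b, a + b⟫ = ‖a + b‖ ^ 2 := real_inner_self_eq_norm_sq _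
  constructor
  · intro hpos
    constructor
    · unfold symQuadForm
      rw [hself]
      have h1 : (0:ℝ) < ‖a + b‖ ^ 2 := by rw [hab]; nlinarith
      nlinarith
    · intro v hv hov
      unfold symQuadForm
      rw [hov]
      have hv2 : (0:ℝ) < ‖v‖ ^ 2 := pow_pos (norm_pos_iff.mpr hv) 2
      nlinarith
  · intro hneg v hv
    unfold symQuadForm
    have hv2 : (0:ℝ) < ‖v‖ ^ 2 := pow_pos (norm_pos_iff.mpr hv) 2
    have hcs : ⟪a + b, v⟫ ^ 2 ≤ ‖a + b‖ ^ 2 * ‖v‖ ^ 2 := by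
      have := abs_real_inner_le_norm (a + b) v
      nlinarith [abs_nonneg ⟪a + b, v⟫, sq_abs ⟪a + b, v⟫]
    nlinarith
end

section
/- Let u : ℝ³ → ℝ be a differentiable function that is even in the first and second variables: u(−x, y, z) = u(x, y, z) and u(x, −y, z) = u(x, y, z) for all (x,y,z). Suppose there exist real numbers z₁ < z₂ < z₃ < z₄ such that u(0,0,z₁) < 0, u(0,0,z₂) > 0, u(0,0,z₃) < 0, and u(0,0,z₄) > 0. Then there exist at least two distinct points p = (0, 0, ζ) on the z-axis with z₁ < ζ < z₄ at which the full gradient vanishes: ∇u(p) = 0. -/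
/-!
On the `z`-axis the partial derivatives in `x` and `y` vanish, being derivatives at `0` of
even functions of one variable. Along the axis, `g z = u (0, 0, z)` is continuous with the sign
pattern `−, +, −, +`, so it attains an interior maximum on `[z₁, z₃]` (above `g z₂ > 0`) and an
interior minimum on `[z₂, z₄]` (below `g z₃ < 0`); these are distinct critical points of `g`,
hence of `u`.
-/

open Set

theorem Function.Even.deriv_zero_eq_zero {F : Type*} [NormedAddCommGroup F] [NormedSpace ℝ F]
    {f : ℝ → F} (hf : f.Even) : deriv f 0 = 0 := by
  have h := deriv_comp_neg (f := f) (x := 0)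
  rw [show (fun x ↦ f (-x)) = f from funext hf, neg_zero] at h
  have h2 : (2 : ℝ) • deriv f 0 = 0 := by rw [two_smul, ← eq_neg_iff_add_eq_zero]; exact h
  exact (smul_eq_zero.mp h2).resolve_left two_ne_zero

theorem HasLineDerivAt.eq_zero_of_even {E F : Type*} [NormedAddCommGroup E] [NormedSpace ℝ E]
    [NormedAddCommGroup F] [NormedSpace ℝ F] {f : E → F} {f' : F} {x v : E}
    (h : HasLineDerivAt ℝ f f' x v) (heven : (fun t : ℝ ↦ f (x + t • v)).Even) : f' = 0 :=
  h.deriv ▸ heven.deriv_zero_eq_zero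

section SignPattern

variable {α β : Type*} [ConditionallyCompleteLinearOrder α] [TopologicalSpace α]
  [OrderTopology α] [LinearOrder β] [TopologicalSpace β] [OrderClosedTopology β]
  {f : α → β} {a b c : α}

theorem exists_mem_Ioo_isLocalMax_ge (hf : ContinuousOn f (Icc a c)) (hb : b ∈ Icc a c)
    (ha : f a < f b) (hc : f c < f b) : ∃ x ∈ Ioo a c, IsLocalMax f x ∧ f b ≤ f x := by
  obtain ⟨x, hx, hmax⟩ := isCompact_Icc.exists_isMaxOn ⟨b, hb⟩ hf
  have hbx : f b ≤ f x := hmax hb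
  have hax : a < x := hx.1.lt_of_ne (by rintro rfl; exact hbx.not_gt ha)
  have hxc : x < c := hx.2.lt_of_ne (by rintro rfl; exact hbx.not_gt hc)
  exact ⟨x, ⟨hax, hxc⟩, hmax.isLocalMax (Icc_mem_nhds hax hxc), hbx⟩

theorem exists_mem_Ioo_isLocalMin_le (hf : ContinuousOn f (Icc a c)) (hb : b ∈ Icc a c)
    (ha : f b < f a) (hc : f b < f c) : ∃ x ∈ Ioo a c, IsLocalMin f x ∧ f x ≤ f b :=
  exists_mem_Ioo_isLocalMax_ge (β := βᵒᵈ) hf hb ha hc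

end SignPattern

theorem fderiv_eq_zero_on_axis_of_even_of_isLocalExtr {u : ℝ × ℝ × ℝ → ℝ} {ζ : ℝ}
    (hu : DifferentiableAt ℝ u (0, 0, ζ)) (hx : (fun x ↦ u (x, 0, ζ)).Even)
    (hy : (fun y ↦ u (0, y, ζ)).Even) (hz : IsLocalExtr (fun z ↦ u (0, 0, z)) ζ) :
    fderiv ℝ u (0, 0, ζ) = 0 := by
  have hL := hu.hasFDerivAt
  refine ContinuousLinearMap.prod_ext (ContinuousLinearMap.ext_ring ?_)
    (ContinuousLinearMap.prod_ext (ContinuousLinearMap.ext_ring ?_)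
      (ContinuousLinearMap.ext_ring ?_))
  · refine (hL.hasLineDerivAt (1, 0, 0)).eq_zero_of_even ?_
    simpa using hx
  · refine (hL.hasLineDerivAt (0, 1, 0)).eq_zero_of_even ?_
    simpa using hy
  · refine hz.hasDerivAt_eq_zero (hL.comp_hasDerivAt ζ ?_)
    exact (hasDerivAt_const ζ 0).prodMk ((hasDerivAt_const ζ 0).prodMk (hasDerivAt_id ζ))

/-- let `u : ℝ³ → ℝ` be differentiable, even in the first and in the
second variable.  If `z ↦ u(0,0,z)` takes the sign pattern `−, +, −, +` at points
`z₁ < z₂ < z₃ < z₄`, then there are at least two distinct points `(0,0,ζ)` on the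
`z`-axis, with `z₁ < ζ < z₄`, at which the full gradient (Fréchet derivative) of `u`
vanishes. -/
theorem two_critical_points_on_axis_from_sign_changes
    (u : ℝ × ℝ × ℝ → ℝ) (hdiff : Differentiable ℝ u)
    (heven_x : ∀ x y z : ℝ, u (-x, y, z) = u (x, y, z))
    (heven_y : ∀ x y z : ℝ, u (x, -y, z) = u (x, y, z))
    (z₁ z₂ z₃ z₄ : ℝ) (h12 : z₁ < z₂) (h23 : z₂ < z₃) (h34 : z₃ < z₄)
    (h1 : u (0, 0, z₁) < 0) (h2 : 0 < u (0, 0, z₂))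
    (h3 : u (0, 0, z₃) < 0) (h4 : 0 < u (0, 0, z₄)) :
    ∃ ζ ζ' : ℝ, z₁ < ζ ∧ ζ < z₄ ∧ z₁ < ζ' ∧ ζ' < z₄ ∧ ζ ≠ ζ' ∧
      fderiv ℝ u (0, 0, ζ) = 0 ∧ fderiv ℝ u (0, 0, ζ') = 0 := by
  have hg : Continuous fun z ↦ u (0, 0, z) := hdiff.continuous.comp (by fun_prop)
  obtain ⟨ζ, hζ, hmax, hζpos⟩ := exists_mem_Ioo_isLocalMax_ge hg.continuousOn
    ⟨h12.le, h23.le⟩ (h1.trans h2) (h3.trans h2)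
  obtain ⟨ζ', hζ', hmin, hζ'neg⟩ := exists_mem_Ioo_isLocalMin_le hg.continuousOn
    ⟨h23.le, h34.le⟩ (h3.trans h2) (h3.trans h4)
  have hne : ζ ≠ ζ' := by
    rintro rfl
    linarith
  have hcrit : ∀ z, IsLocalExtr (fun z ↦ u (0, 0, z)) z → fderiv ℝ u (0, 0, z) = 0 :=
    fun z hz ↦ fderiv_eq_zero_on_axis_of_even_of_isLocalExtr (hdiff _)
      (fun x ↦ heven_x x 0 z) (fun y ↦ heven_y 0 y z) hz
  exact ⟨ζ, ζ', hζ.1, hζ.2.trans h34, h12.trans hζ'.1, hζ'.2, hne, hcrit ζ hmax.isExtr,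
    hcrit ζ' hmin.isExtr⟩
end
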